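/- arXiv:1806.07740 — 4 statements merged into one kernel-verified Lean document; each statement's English description precedes it below -/
import Mathlib

section
/- Let A ∈ ℝ, let m ≥ 1, let λ_1, …, λ_m be non-real complex numbers of modulus 1 such that for all i ≠ j, λ_i ∉ {λ_j, conj(λ_j)}, let C_1, …, C_m be nonzero polynomials with complex coefficients, and let r : ℕ → ℝ satisfy r(n) → 0 as n → ∞. Define the real sequence u_n = A + Σ_{i=1}^m ( C_i(n) λ_i^n + conj(C_i(n)) conj(λ_i)^n ) + r(n). Then u_n does not tend to ∞ as n → ∞. -/
/-!
Let `d` be the largest degree of the `C i` and `c i` their coefficients of degree `d`, so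
that `(u n - A) / n ^ d - g n → 0` for the bounded sequence `g n = 2 Re (∑ c i λ_i ^ n)`.
If `d = 0` this already contradicts `u n → ∞`. Otherwise some `c i ≠ 0`, and `u n → ∞`
forces `g n ≥ -ε` eventually, for every `ε > 0`. Since no `λ_i`, `λ_i λ_j` or
`λ_i conj λ_j` (`i ≠ j`) equals `1`, the Cesàro mean of `g` is `0` while that of `g²` is
`2 ∑ |c i|² > 0`; averaging `(M - g) (g + ε) ≥ 0`, with `M` a bound for `g`, gives
`2 ∑ |c i|² ≤ M ε` for all `ε > 0`.
-/

open Filter Finset Topology ComplexConjugate Polynomial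

section CesaroMean

variable {𝕜 : Type*} [Field 𝕜]

def cesaroMean (f : ℕ → 𝕜) (N : ℕ) : 𝕜 := (N : 𝕜)⁻¹ * ∑ n ∈ range N, f n

theorem cesaroMean_add (f g : ℕ → 𝕜) (N : ℕ) :
    cesaroMean (fun n => f n + g n) N = cesaroMean f N + cesaroMean g N := by
  simp only [cesaroMean, sum_add_distrib, mul_add]

theorem cesaroMean_sub (f g : ℕ → 𝕜) (N : ℕ) :
    cesaroMean (fun n => f n - g n) N = cesaroMean f N - cesaroMean g N := by
  simp only [cesaroMean, sum_sub_distrib, mul_sub]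

theorem cesaroMean_const_mul (a : 𝕜) (f : ℕ → 𝕜) (N : ℕ) :
    cesaroMean (fun n => a * f n) N = a * cesaroMean f N := by
  simp only [cesaroMean, ← mul_sum]
  ring

theorem cesaroMean_sum {ι : Type*} (s : Finset ι) (f : ι → ℕ → 𝕜) (N : ℕ) :
    cesaroMean (fun n => ∑ i ∈ s, f i n) N = ∑ i ∈ s, cesaroMean (f i) N := by
  simp only [cesaroMean, sum_comm (s := range N), mul_sum]

theorem cesaroMean_const [CharZero 𝕜] (a : 𝕜) {N : ℕ} (hN : N ≠ 0) :
    cesaroMean (fun _ => a) N = a := by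
  simp [cesaroMean, hN]

end CesaroMean

theorem Filter.Tendsto.re {α : Type*} {l : Filter α} {f : α → ℂ} {z : ℂ}
    (hf : Tendsto f l (𝓝 z)) : Tendsto (fun x => (f x).re) l (𝓝 z.re) :=
  (Complex.continuous_re.tendsto z).comp hf

theorem cesaroMean_re (f : ℕ → ℂ) (N : ℕ) :
    cesaroMean (fun n => (f n).re) N = (cesaroMean f N).re := by
  simp [cesaroMean, Complex.re_sum]

theorem nonneg_of_tendsto_cesaroMean {f : ℕ → ℝ} {L : ℝ} (hf : ∀ᶠ n in atTop, 0 ≤ f n)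
    (h : Tendsto (cesaroMean f) atTop (𝓝 L)) : 0 ≤ L := by
  obtain ⟨N₀, hN₀⟩ := eventually_atTop.mp hf
  have hhead : Tendsto (fun N : ℕ => (N : ℝ)⁻¹ * ∑ n ∈ range N₀, f n) atTop (𝓝 0) := by
    simpa using (tendsto_inv_atTop_nhds_zero_nat (𝕜 := ℝ)).mul_const (∑ n ∈ range N₀, f n)
  refine le_of_tendsto_of_tendsto hhead h ?_
  filter_upwards [eventually_ge_atTop N₀] with N hN
  rw [cesaroMean, ← sum_range_add_sum_Ico f hN]
  have htail : 0 ≤ ∑ n ∈ Ico N₀ N, f n := sum_nonneg fun n hn => hN₀ n (mem_Ico.mp hn).1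
  gcongr
  linarith

theorem tendsto_cesaroMean_pow {μ : ℂ} (hμ : ‖μ‖ = 1) :
    Tendsto (cesaroMean (μ ^ ·)) atTop (𝓝 (if μ = 1 then 1 else 0)) := by
  split_ifs with h1
  · refine tendsto_const_nhds.congr' ?_
    filter_upwards [eventually_ne_atTop 0] with N hN
    simp [h1, cesaroMean_const _ hN]
  · refine squeeze_zero_norm (a := fun N : ℕ => 2 / ‖μ - 1‖ / N) (fun N => ?_)
      (tendsto_const_div_atTop_nhds_zero_nat _)
    rw [cesaroMean, geom_sum_eq h1, norm_mul, norm_div, norm_inv, Complex.norm_natCast,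
      inv_mul_eq_div]
    gcongr
    exact (norm_sub_le _ _).trans (by simp [hμ]; norm_num)

theorem nonpos_of_tendsto_cesaroMean_sq {g : ℕ → ℝ} {M L : ℝ} (hM : ∀ n, g n ≤ M)
    (hlow : ∀ ε > 0, ∀ᶠ n in atTop, -ε ≤ g n) (hmean : Tendsto (cesaroMean g) atTop (𝓝 0))
    (hsq : Tendsto (cesaroMean fun n => g n ^ 2) atTop (𝓝 L)) : L ≤ 0 := by
  -- The mean of `(M - g) (g + ε) = (M - ε) g + M ε - g²`, eventually `≥ 0`, tends to `M ε - L`.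
  have hL : ∀ ε > 0, L ≤ M * ε := by
    intro ε hε
    have hprod : Tendsto (cesaroMean fun n => (M - g n) * (g n + ε)) atTop
        (𝓝 ((M - ε) * 0 + M * ε - L)) := by
      refine (((hmean.const_mul (M - ε)).add_const (M * ε)).sub hsq).congr' ?_
      filter_upwards [eventually_ne_atTop 0] with N hN
      rw [← cesaroMean_const_mul, ← cesaroMean_const (M * ε) hN, ← cesaroMean_add,
        ← cesaroMean_sub]
      congr 1
      ext n
      ring
    have := nonneg_of_tendsto_cesaroMean ((hlow ε hε).mono fun n hn =>
      mul_nonneg (sub_nonneg.mpr (hM n)) (by linarith)) hprod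
    linarith
  have hlim : Tendsto (fun ε => M * ε) (𝓝[>] 0) (𝓝 0) := by
    simpa using ((continuous_const_mul M).tendsto 0).mono_left nhdsWithin_le_nhds
  exact ge_of_tendsto hlim (eventually_nhdsWithin_of_forall hL)

section ExpSum

variable {ι κ : Type*} [Fintype ι] [Fintype κ]

def expSum (c μ : ι → ℂ) (n : ℕ) : ℂ := ∑ i, c i * μ i ^ n

theorem norm_expSum_le (c : ι → ℂ) {μ : ι → ℂ} (hμ : ∀ i, ‖μ i‖ = 1) (n : ℕ) :
    ‖expSum c μ n‖ ≤ ∑ i, ‖c i‖ :=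
  (norm_sum_le _ _).trans_eq <| sum_congr rfl fun i _ => by simp [hμ]

theorem expSum_mul_expSum (a μ : ι → ℂ) (b ν : κ → ℂ) (n : ℕ) :
    expSum a μ n * expSum b ν n =
      expSum (fun p : ι × κ => a p.1 * b p.2) (fun p => μ p.1 * ν p.2) n := by
  simp only [expSum, sum_mul_sum, ← univ_product_univ, sum_product, mul_pow]
  exact sum_congr rfl fun i _ => sum_congr rfl fun j _ => by ring

theorem conj_expSum (c μ : ι → ℂ) (n : ℕ) :
    conj (expSum c μ n) = expSum (fun i => conj (c i)) (fun i => conj (μ i)) n := by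
  simp [expSum]

theorem tendsto_cesaroMean_expSum (c : ι → ℂ) {μ : ι → ℂ} (hμ : ∀ i, ‖μ i‖ = 1) :
    Tendsto (cesaroMean (expSum c μ)) atTop (𝓝 (∑ i, if μ i = 1 then c i else 0)) := by
  have hmean : cesaroMean (expSum c μ) = fun N => ∑ i, c i * cesaroMean (μ i ^ ·) N := by
    ext N
    change cesaroMean (fun n => ∑ i, c i * μ i ^ n) N = _
    rw [cesaroMean_sum]
    exact sum_congr rfl fun i _ => cesaroMean_const_mul _ _ _
  rw [hmean]
  refine tendsto_finsetSum _ fun i _ => ?_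
  simpa using (tendsto_cesaroMean_pow (hμ i)).const_mul (c i)

theorem tendsto_cesaroMean_expSum_of_ne_one (c : ι → ℂ) {μ : ι → ℂ} (hμ : ∀ i, ‖μ i‖ = 1)
    (h1 : ∀ i, μ i ≠ 1) : Tendsto (cesaroMean (expSum c μ)) atTop (𝓝 0) := by
  simpa [h1] using tendsto_cesaroMean_expSum c hμ

theorem tendsto_cesaroMean_expSum_mul_conj (c : ι → ℂ) {μ : ι → ℂ} (hμ : ∀ i, ‖μ i‖ = 1)
    (hinj : Function.Injective μ) :
    Tendsto (cesaroMean fun n => expSum c μ n * conj (expSum c μ n)) atTop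
      (𝓝 (∑ i, (Complex.normSq (c i) : ℂ))) := by
  have hμ0 : ∀ i, μ i ≠ 0 := fun i h => by simpa [h] using hμ i
  have hfreq : ∀ i j, μ i * conj (μ j) = 1 ↔ i = j := fun i j => by
    rw [← Complex.inv_eq_conj (hμ j), mul_inv_eq_one₀ (hμ0 j), hinj.eq_iff]
  simp only [conj_expSum, expSum_mul_expSum]
  convert tendsto_cesaroMean_expSum (fun p : ι × ι => c p.1 * conj (c p.2))
    (μ := fun p => μ p.1 * conj (μ p.2)) fun p => by simp [hμ]
  rw [Fintype.sum_prod_type]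
  refine sum_congr rfl fun i _ => ?_
  rw [sum_eq_single i (fun j _ hji => if_neg ((hfreq i j).not.mpr hji.symm)) (by simp),
    if_pos ((hfreq i i).mpr rfl), Complex.mul_conj]

end ExpSum

section RealPart

variable {ι : Type*} [Fintype ι]

theorem tendsto_cesaroMean_re_expSum (c : ι → ℂ) {μ : ι → ℂ} (hμ : ∀ i, ‖μ i‖ = 1)
    (h1 : ∀ i, μ i ≠ 1) :
    Tendsto (cesaroMean fun n => 2 * (expSum c μ n).re) atTop (𝓝 0) := by
  have hmean : cesaroMean (fun n => 2 * (expSum c μ n).re) =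
      fun N => 2 * (cesaroMean (expSum c μ) N).re := by
    ext N
    rw [cesaroMean_const_mul, cesaroMean_re]
  rw [hmean]
  simpa using (tendsto_cesaroMean_expSum_of_ne_one c hμ h1).re.const_mul 2

theorem tendsto_cesaroMean_sq_re_expSum (c : ι → ℂ) {μ : ι → ℂ} (hμ : ∀ i, ‖μ i‖ = 1)
    (hsq : ∀ i j, μ i * μ j ≠ 1) (hinj : Function.Injective μ) :
    Tendsto (cesaroMean fun n => (2 * (expSum c μ n).re) ^ 2) atTop
      (𝓝 (2 * ∑ i, Complex.normSq (c i))) := by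
  have hsq_re : ∀ z : ℂ, (2 * z.re) ^ 2 = 2 * (z * z).re + 2 * (z * conj z).re := fun z => by
    simp only [Complex.mul_re, Complex.conj_re, Complex.conj_im]
    ring
  have hmean : cesaroMean (fun n => (2 * (expSum c μ n).re) ^ 2) = fun N =>
      2 * (cesaroMean (fun n => expSum c μ n * expSum c μ n) N).re +
        2 * (cesaroMean (fun n => expSum c μ n * conj (expSum c μ n)) N).re := by
    ext N
    simp only [hsq_re, cesaroMean_add, cesaroMean_const_mul, cesaroMean_re]
  have hsquare : Tendsto (cesaroMean fun n => expSum c μ n * expSum c μ n) atTop (𝓝 0) := by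
    simp only [expSum_mul_expSum]
    exact tendsto_cesaroMean_expSum_of_ne_one _ (fun p => by simp [hμ]) fun p => hsq p.1 p.2
  rw [hmean]
  simpa using (hsquare.re.const_mul 2).add
    ((tendsto_cesaroMean_expSum_mul_conj c hμ hinj).re.const_mul 2)

end RealPart

theorem Polynomial.tendsto_eval_natCast_div_pow {𝕜 : Type*} [RCLike 𝕜] {P : 𝕜[X]} {d : ℕ}
    (hd : P.natDegree ≤ d) :
    Tendsto (fun n : ℕ => P.eval (n : 𝕜) / (n : 𝕜) ^ d) atTop (𝓝 (P.coeff d)) := by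
  -- `P(n) / n ^ d` is the reflected polynomial `X ^ d * P(1 / X)` evaluated at `1 / n`.
  have hreflect : ∀ n : ℕ, n ≠ 0 →
      P.eval (n : 𝕜) / (n : 𝕜) ^ d = (P.reflect d).eval (n : 𝕜)⁻¹ := by
    intro n hn
    have hn' : (n : 𝕜) ≠ 0 := Nat.cast_ne_zero.mpr hn
    let _ : Invertible (n : 𝕜) := invertibleOfNonzero hn'
    rw [div_eq_iff (pow_ne_zero _ hn'), ← invOf_eq_inv, eval, eval,
      eval₂_reflect_mul_pow _ _ _ _ hd]
  have hlim := ((P.reflect d).continuous.tendsto 0).comp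
    (tendsto_inv_atTop_nhds_zero_nat (𝕜 := 𝕜))
  rw [← coeff_zero_eq_eval_zero, coeff_reflect, revAt_le (Nat.zero_le d), Nat.sub_zero] at hlim
  refine hlim.congr' ?_
  filter_upwards [eventually_ne_atTop 0] with n hn
  exact (hreflect n hn).symm

theorem tendsto_sub_div_pow_sub_re_expSum {ι : Type*} [Fintype ι] {C : ι → ℂ[X]} {μ : ι → ℂ}
    {d : ℕ} (hμ : ∀ i, ‖μ i‖ = 1) (hd : ∀ i, (C i).natDegree ≤ d) {A : ℝ} {r u : ℕ → ℝ}
    (hr : Tendsto r atTop (𝓝 0))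
    (hu : ∀ n, u n = A + 2 * (∑ i, (C i).eval (n : ℂ) * μ i ^ n).re + r n) :
    Tendsto (fun n => (u n - A) / (n : ℝ) ^ d - 2 * (expSum (fun i => (C i).coeff d) μ n).re)
      atTop (𝓝 0) := by
  set E : ℕ → ℂ := fun n => ∑ i, ((C i).eval (n : ℂ) / (n : ℂ) ^ d - (C i).coeff d) * μ i ^ n
  have hE : Tendsto E atTop (𝓝 0) := by
    have hterm : ∀ i, Tendsto (fun n : ℕ =>
        ((C i).eval (n : ℂ) / (n : ℂ) ^ d - (C i).coeff d) * μ i ^ n) atTop (𝓝 0) := fun i => by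
      have h := (tendsto_eval_natCast_div_pow (hd i)).sub_const ((C i).coeff d)
      rw [sub_self] at h
      exact squeeze_zero_norm (fun n => by simp [hμ]) (tendsto_norm_zero.comp h)
    simpa using tendsto_finsetSum univ fun i _ => hterm i
  have hrem : Tendsto (fun n : ℕ => r n / (n : ℝ) ^ d) atTop (𝓝 0) := by
    refine squeeze_zero_norm' ?_ (tendsto_norm_zero.comp hr)
    filter_upwards [eventually_ne_atTop 0] with n hn
    rw [norm_div]
    exact div_le_self (norm_nonneg _)
      (by simpa using one_le_pow₀ (Nat.one_le_cast.mpr (Nat.one_le_iff_ne_zero.mpr hn)))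
  have heq : ∀ n : ℕ, (u n - A) / (n : ℝ) ^ d - 2 * (expSum (fun i => (C i).coeff d) μ n).re =
      2 * (E n).re + r n / (n : ℝ) ^ d := by
    intro n
    have hE_eq : E n = (∑ i, (C i).eval (n : ℂ) * μ i ^ n) / ((n ^ d : ℕ) : ℂ) -
        expSum (fun i => (C i).coeff d) μ n := by
      simp only [E, expSum, sub_mul, sum_sub_distrib, sum_div, Nat.cast_pow, div_mul_eq_mul_div]
    rw [hE_eq, Complex.sub_re, Complex.div_natCast_re, hu n, Nat.cast_pow]
    ring
  simpa [heq] using (hE.re.const_mul 2).add hrem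

theorem Complex.mul_ne_one_of_ne_conj {ι : Type*} {μ : ι → ℂ} (hμ : ∀ i, ‖μ i‖ = 1)
    (him : ∀ i, (μ i).im ≠ 0) (hconj : ∀ i j, i ≠ j → μ i ≠ conj (μ j)) (i j : ι) :
    μ i * μ j ≠ 1 := by
  rw [Ne, mul_eq_one_iff_eq_inv₀ (norm_ne_zero_iff.mp ((hμ j).symm ▸ one_ne_zero)),
    Complex.inv_eq_conj (hμ j)]
  obtain rfl | hij := eq_or_ne i j
  · exact fun h => him i (Complex.conj_eq_iff_im.mp h.symm)
  · exact hconj i j hij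

theorem Polynomial.exists_coeff_sup_natDegree_ne_zero {ι R : Type*} [Semiring R] (s : Finset ι)
    (C : ι → R[X]) (hd : s.sup (fun i => (C i).natDegree) ≠ 0) :
    ∃ i ∈ s, (C i).coeff (s.sup fun i => (C i).natDegree) ≠ 0 := by
  obtain ⟨i, hi, hmax⟩ := exists_mem_eq_sup s (nonempty_of_ne_empty (by rintro rfl; simp at hd))
    fun i => (C i).natDegree
  refine ⟨i, hi, ?_⟩
  rw [hmax, coeff_natDegree, Ne, leadingCoeff_eq_zero]
  intro h
  simp [hmax, h] at hd

theorem no_divergence_without_real_dominant_root_general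
    (A : ℝ) (m : ℕ) (lam : Fin m → ℂ)
    (hmod : ∀ i, ‖lam i‖ = 1)
    (hnonreal : ∀ i, (lam i).im ≠ 0)
    (hsep : ∀ i j, i ≠ j → lam i ≠ lam j ∧ lam i ≠ star (lam j))
    (C : Fin m → Polynomial ℂ)
    (r : ℕ → ℝ) (hr : Tendsto r atTop (nhds 0))
    (u : ℕ → ℝ)
    (hu : ∀ n : ℕ, (u n : ℂ) =
      (A : ℂ) + ∑ i, ((C i).eval (n : ℂ) * lam i ^ n
        + star ((C i).eval (n : ℂ)) * (star (lam i)) ^ n) + (r n : ℂ)) :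
    ¬ Tendsto u atTop atTop := by
  intro hu_top
  set d := univ.sup fun i => (C i).natDegree
  set c : Fin m → ℂ := fun i => (C i).coeff d
  set g : ℕ → ℝ := fun n => 2 * (expSum c lam n).re
  have hg_le : ∀ n, g n ≤ 2 * ∑ i, ‖c i‖ := fun n => by
    linarith [(Complex.re_le_norm _).trans (norm_expSum_le c hmod n)]
  have hu_re : ∀ n : ℕ, u n = A + 2 * (∑ i, (C i).eval (n : ℂ) * lam i ^ n).re + r n := by
    intro n
    have hsum := Complex.add_conj (∑ i, (C i).eval (n : ℂ) * lam i ^ n)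
    simp only [map_sum, map_mul, map_pow, ← sum_add_distrib] at hsum
    have h := hu n
    simp only [Complex.star_def, hsum] at h
    exact_mod_cast h
  have hasymp : Tendsto (fun n => (u n - A) / (n : ℝ) ^ d - g n) atTop (𝓝 0) :=
    tendsto_sub_div_pow_sub_re_expSum hmod
      (fun i => le_sup (f := fun i => (C i).natDegree) (mem_univ i)) hr hu_re
  obtain hd | hd := eq_or_ne d 0
  · obtain ⟨n, hn, hn_large⟩ := ((hasymp.eventually (gt_mem_nhds one_pos)).and
      (hu_top.eventually_gt_atTop (A + 2 * ∑ i, ‖c i‖ + 1))).exists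
    simp only [hd, pow_zero, div_one] at hn
    linarith [hg_le n]
  obtain ⟨i₀, -, hc₀⟩ := exists_coeff_sup_natDegree_ne_zero univ C hd
  have hlow : ∀ ε > 0, ∀ᶠ n in atTop, -ε ≤ g n := fun ε hε => by
    filter_upwards [hasymp.eventually (gt_mem_nhds hε), hu_top.eventually_ge_atTop A]
      with n hn hA
    linarith [div_nonneg (sub_nonneg.mpr hA) (pow_nonneg (Nat.cast_nonneg n) d)]
  have hL := nonpos_of_tendsto_cesaroMean_sq hg_le hlow
    (tendsto_cesaroMean_re_expSum c hmod fun i h => hnonreal i (by simp [h]))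
    (tendsto_cesaroMean_sq_re_expSum c hmod
      (Complex.mul_ne_one_of_ne_conj hmod hnonreal fun i j hij => (hsep i j hij).2)
      fun i j h => by_contra fun hij => (hsep i j hij).1 h)
  have := single_le_sum (fun i _ => Complex.normSq_nonneg (c i)) (mem_univ i₀)
  linarith [Complex.normSq_pos.mpr hc₀]

/-- If u_n = A + Σ_i (C_i(n) λ_i^n + conj(C_i(n)) conj(λ_i)^n) + r(n) with
A real, the λ_i non-real of modulus 1 and pairwise neither equal nor conjugate, the C_i
nonzero complex polynomials, and r(n) → 0, then u_n does not tend to ∞. -/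
theorem no_divergence_without_real_dominant_root
    (A : ℝ) (m : ℕ) (hm : 1 ≤ m) (lam : Fin m → ℂ)
    (hmod : ∀ i, ‖lam i‖ = 1)
    (hnonreal : ∀ i, (lam i).im ≠ 0)
    (hsep : ∀ i j, i ≠ j → lam i ≠ lam j ∧ lam i ≠ star (lam j))
    (C : Fin m → Polynomial ℂ) (hC : ∀ i, C i ≠ 0)
    (r : ℕ → ℝ) (hr : Tendsto r atTop (nhds 0))
    (u : ℕ → ℝ)
    (hu : ∀ n : ℕ, (u n : ℂ) =
      (A : ℂ) + ∑ i, ((C i).eval (n : ℂ) * lam i ^ n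
        + star ((C i).eval (n : ℂ)) * (star (lam i)) ^ n) + (r n : ℂ)) :
    ¬ Tendsto u atTop atTop :=
  no_divergence_without_real_dominant_root_general A m lam hmod hnonreal hsep C r hr u hu
end

section
/- Let α ∈ ℝ be irrational and let β ∈ ℝ. Then there exists a constant t > 0 such that for infinitely many n ∈ ℕ there is an integer m with |nα − m − β| < t/n. -/
/-!
Take a good rational approximation `p / d` of `α` in lowest terms, `|α - p / d| < 1 / d ^ 2`,
with `d` as large as we like, and round `d β` to an integer `b`. Since `p` is invertible modulo
`d`, some `n ∈ [d, 2d)` has `n p ≡ b (mod d)`, i.e. `n p / d = b / d + m` for an integer `m`.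
Then `|n α - m - β| ≤ n |α - p / d| + |b / d - β| < 2 / d + 1 / (2d) < 5 / n`.
-/

theorem Rat.finite_setOf_den_le_abs_le (N : ℕ) (B : ℝ) :
    {q : ℚ | q.den ≤ N ∧ |(q : ℝ)| ≤ B}.Finite := by
  have hinj : Set.InjOn (fun q : ℚ => (q.num, q.den)) Set.univ := fun q _ r _ h =>
    Rat.ext (congrArg Prod.fst h) (congrArg Prod.snd h)
  refine (((Set.finite_Icc (-⌈B * N⌉) ⌈B * N⌉).prod (Set.finite_Iic N)).preimage
    (hinj.mono (Set.subset_univ _))).subset ?_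
  rintro q ⟨hden, habs⟩
  have hnum : |q.num| ≤ ⌈B * N⌉ := by
    have : |(q.num : ℝ)| ≤ B * N := by
      rw [← Rat.cast_intCast, ← Rat.mul_den_eq_num, Rat.cast_mul, abs_mul, Rat.cast_natCast,
        Nat.abs_cast]
      exact mul_le_mul habs (mod_cast hden) (Nat.cast_nonneg _) ((abs_nonneg _).trans habs)
    exact_mod_cast this.trans (Int.le_ceil _)
  exact ⟨abs_le.mp hnum, hden⟩

theorem Real.exists_rat_abs_sub_lt_one_div_den_sq_and_lt_den {ξ : ℝ} (hξ : Irrational ξ) (N : ℕ) :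
    ∃ q : ℚ, |ξ - q| < 1 / (q.den : ℝ) ^ 2 ∧ N < q.den := by
  have hsmall : {q : ℚ | |ξ - q| < 1 / (q.den : ℝ) ^ 2 ∧ q.den ≤ N} ⊆
      {q : ℚ | q.den ≤ N ∧ |(q : ℝ)| ≤ |ξ| + 1} := by
    rintro q ⟨hq, hden⟩
    have hle : 1 / (q.den : ℝ) ^ 2 ≤ 1 := by
      rw [div_le_one (by positivity)]
      exact one_le_pow₀ (mod_cast q.pos)
    refine ⟨hden, ?_⟩
    linarith [abs_sub_abs_le_abs_sub (q : ℝ) ξ, abs_sub_comm (q : ℝ) ξ]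
  obtain ⟨q, hq, hden⟩ := ((Real.infinite_rat_abs_sub_lt_one_div_den_sq_of_irrational hξ).sdiff
    ((Rat.finite_setOf_den_le_abs_le N (|ξ| + 1)).subset hsmall)).nonempty
  exact ⟨q, hq, not_le.mp fun h => hden ⟨hq, h⟩⟩

theorem Rat.exists_nat_mul_eq_div_den_add_int (q : ℚ) (b : ℤ) :
    ∃ n : ℕ, q.den ≤ n ∧ n < 2 * q.den ∧ ∃ m : ℤ, n * q = b / q.den + m := by
  obtain ⟨u, v, huv⟩ := q.isCoprime_num_den
  have hd : (0 : ℤ) < q.den := mod_cast q.pos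
  set r := b * u % q.den with hr
  have hr0 : 0 ≤ r := Int.emod_nonneg _ hd.ne'
  have hrd : r < q.den := Int.emod_lt_of_pos _ hd
  -- `u` inverts `q.num` modulo `q.den`, so `b * u` and its residue `r` solve `n * q.num ≡ b`
  have hmul : (r + q.den) * q.num = b + q.den * (q.num * (1 - b * u / q.den) - b * v) := by
    rw [hr, Int.emod_def]
    linear_combination b * huv
  refine ⟨(r + q.den).toNat, by omega, by omega, q.num * (1 - b * u / q.den) - b * v, ?_⟩
  have hcast : (((r + q.den).toNat : ℕ) : ℚ) = ((r + q.den : ℤ) : ℚ) := by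
    rw [← Int.cast_natCast, Int.toNat_of_nonneg (by omega)]
  have hden : (q.den : ℚ) ≠ 0 := by positivity
  apply mul_right_cancel₀ hden
  rw [hcast, mul_assoc, q.mul_den_eq_num, add_mul, div_mul_cancel₀ _ hden]
  exact_mod_cast hmul.trans (by ring)

theorem Rat.exists_nat_abs_mul_sub_int_sub_le (q : ℚ) (α β : ℝ) :
    ∃ n : ℕ, q.den ≤ n ∧ n < 2 * q.den ∧
      ∃ m : ℤ, |n * α - m - β| ≤ n * |α - q| + 1 / (2 * q.den) := by
  set b := round ((q.den : ℝ) * β)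
  obtain ⟨n, hdn, hn, m, hnm⟩ := q.exists_nat_mul_eq_div_den_add_int b
  refine ⟨n, hdn, hn, m, ?_⟩
  have hd : (0 : ℝ) < q.den := mod_cast q.pos
  have hnm' : (n : ℝ) * q = b / q.den + m := by exact_mod_cast congrArg (Rat.cast : ℚ → ℝ) hnm
  have hround : |(b : ℝ) / q.den - β| ≤ 1 / (2 * q.den) := by
    rw [show (b : ℝ) / q.den - β = -((q.den * β - b) / q.den) by field_simp; ring, abs_neg,
      abs_div, abs_of_pos hd, div_le_div_iff₀ hd (by positivity)]
    nlinarith [abs_sub_round ((q.den : ℝ) * β)]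
  calc |n * α - m - β| = |n * (α - q) + (b / q.den - β)| := by rw [mul_sub, hnm']; ring_nf
    _ ≤ |n * (α - q)| + |b / q.den - β| := abs_add_le _ _
    _ ≤ n * |α - q| + 1 / (2 * q.den) := by
      rw [abs_mul, Nat.abs_cast]; gcongr

/-- for α irrational and β real there is a constant t > 0 such that for
infinitely many positive integers n there is an integer m with |nα − m − β| < t/n. -/
theorem inhomogeneous_dirichlet (α β : ℝ) (hirr : Irrational α) :
    ∃ t : ℝ, 0 < t ∧
      {n : ℕ | 0 < n ∧ ∃ m : ℤ, |(n : ℝ) * α - m - β| < t / n}.Infinite := by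
  refine ⟨5, by norm_num, Set.infinite_of_forall_exists_gt fun N => ?_⟩
  obtain ⟨q, hq, hNq⟩ := Real.exists_rat_abs_sub_lt_one_div_den_sq_and_lt_den hirr N
  obtain ⟨n, hqn, hnq, m, hm⟩ := q.exists_nat_abs_mul_sub_int_sub_le α β
  have hd : (0 : ℝ) < q.den := mod_cast q.pos
  have hn : (n : ℝ) < 2 * q.den := mod_cast hnq
  have hn0 : (0 : ℝ) < n := hd.trans_le (mod_cast hqn)
  refine ⟨n, ⟨by omega, m, hm.trans_lt ?_⟩, by omega⟩
  calc (n : ℝ) * |α - q| + 1 / (2 * q.den) < n * (1 / q.den ^ 2) + 1 / (2 * q.den) := by gcongr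
    _ ≤ 2 * q.den * (1 / q.den ^ 2) + 1 / (2 * q.den) := by gcongr
    _ = 5 / (2 * q.den) := by field_simp; ring
    _ < 5 / n := by gcongr
end

section
/- Let λ ∈ ℂ with |λ| = 1 and λ not a root of unity, let a_1, b_1 ∈ ℝ, and let a_2, b_2 ∈ ℂ with a_2 ≠ 0. Define the real sequence u_n = a_1 n + b_1 + (a_2 n + b_2) λ^n + conj(a_2 n + b_2) conj(λ)^n. Then u_n → ∞ as n → ∞ if and only if a_1 > 2|a_2|. Moreover, if a_1 > 2|a_2| then there exist a rational ε > 0 and N ∈ ℕ such that u_n > ε n for all n > N; and if a_1 = 2|a_2| then u_n is bounded above by a constant for infinitely many n. -/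
open Filter Real

/-- Sweep lemma: stepping by `s` from `x`, we land within `|s|` of `π` mod `2π`,
in at most `2π/|s|` steps. -/
lemma sweep (x s : ℝ) (hs : s ≠ 0) :
    ∃ (k : ℕ) (m : ℤ), (k : ℝ) * |s| ≤ 2 * π ∧
      |x + k * s - π - 2 * π * m| ≤ |s| := by
  have h2pi : (0:ℝ) < 2 * π := by positivity
  rcases lt_or_gt_of_ne hs with hneg | hpos
  · -- s < 0
    set f : ℤ := ⌊(x - π) / (2 * π)⌋ with hf
    set y : ℝ := (x - π) - 2 * π * f with hy
    have hy0 : 0 ≤ y := by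
      have := Int.sub_floor_div_mul_nonneg (x - π) h2pi
      linarith [this]
    have hy2 : y < 2 * π := by
      have := Int.sub_floor_div_mul_lt (x - π) h2pi
      linarith [this]
    have hspos : 0 < -s := by linarith
    set k0 : ℤ := ⌊y / (-s)⌋ with hk0
    have hk0nn : 0 ≤ k0 := Int.floor_nonneg.mpr (by positivity)
    refine ⟨k0.toNat, f, ?_, ?_⟩
    · have hcast : ((k0.toNat : ℕ) : ℝ) = (k0 : ℝ) := by
        exact_mod_cast congrArg (Int.cast : ℤ → ℝ) (Int.toNat_of_nonneg hk0nn)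
      rw [hcast, abs_of_neg hneg]
      have h1 : (k0 : ℝ) ≤ y / (-s) := Int.floor_le _
      calc (k0:ℝ) * -s ≤ (y / (-s)) * (-s) := by nlinarith
        _ = y := by field_simp
        _ ≤ 2 * π := le_of_lt hy2
    · have hcast : ((k0.toNat : ℕ) : ℝ) = (k0 : ℝ) := by
        exact_mod_cast congrArg (Int.cast : ℤ → ℝ) (Int.toNat_of_nonneg hk0nn)
      rw [hcast]
      have h1 : (k0 : ℝ) ≤ y / (-s) := Int.floor_le _
      have h2 : y / (-s) < k0 + 1 := Int.lt_floor_add_one _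
      have e1 : (k0:ℝ) * (-s) ≤ y := by
        calc (k0:ℝ) * (-s) ≤ (y / (-s)) * (-s) := by nlinarith
          _ = y := by field_simp
      have e2 : y < ((k0:ℝ) + 1) * (-s) := by
        calc y = (y / (-s)) * (-s) := by field_simp
          _ < ((k0:ℝ)+1) * (-s) := by nlinarith
      have : x + k0 * s - π - 2 * π * f = y + k0 * s := by rw [hy]; ring
      rw [this, abs_of_neg hneg, abs_of_nonneg (by nlinarith)]
      nlinarith
  · -- s > 0
    set f : ℤ := ⌊(π - x) / (2 * π)⌋ with hf
    set y : ℝ := (π - x) - 2 * π * f with hy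
    have hy0 : 0 ≤ y := by
      have := Int.sub_floor_div_mul_nonneg (π - x) h2pi
      linarith [this]
    have hy2 : y < 2 * π := by
      have := Int.sub_floor_div_mul_lt (π - x) h2pi
      linarith [this]
    set k0 : ℤ := ⌊y / s⌋ with hk0
    have hk0nn : 0 ≤ k0 := Int.floor_nonneg.mpr (by positivity)
    have hcast : ((k0.toNat : ℕ) : ℝ) = (k0 : ℝ) := by
      exact_mod_cast congrArg (Int.cast : ℤ → ℝ) (Int.toNat_of_nonneg hk0nn)
    have h1 : (k0 : ℝ) ≤ y / s := Int.floor_le _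
    have h2 : y / s < k0 + 1 := Int.lt_floor_add_one _
    have e1 : (k0:ℝ) * s ≤ y := by
      calc (k0:ℝ) * s ≤ (y / s) * s := by nlinarith
        _ = y := by field_simp
    have e2 : y < ((k0:ℝ) + 1) * s := by
      calc y = (y / s) * s := by field_simp
        _ < ((k0:ℝ)+1) * s := by nlinarith
    refine ⟨k0.toNat, -f, ?_, ?_⟩
    · rw [hcast, abs_of_pos hpos]; linarith
    · have : x + k0 * s - π - 2 * π * (-f : ℤ) = k0 * s - y := by
        push_cast; rw [hy]; ring
      rw [hcast, this, abs_of_pos hpos, abs_of_nonpos (by linarith)]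
      linarith

lemma aux1 (t : ℝ) (ht : 0 ≤ t) (p : ℝ) (hp : 0 < p) :
    t * ((2 * p / (t + 1)) ^ 2 / 2) ≤ 2 * p ^ 2 := by
  have h1 : (0:ℝ) < t + 1 := by linarith
  rw [div_pow, div_div, ← mul_div_assoc, div_le_iff₀ (by positivity)]
  nlinarith [sq_nonneg t, sq_nonneg p, mul_nonneg (mul_nonneg hp.le hp.le) ht,
    mul_nonneg (mul_nonneg hp.le hp.le) (mul_nonneg ht ht)]

set_option maxHeartbeats 1000000 in
/-- Key lemma: for α with α/(2π) irrational, for any β and N ≥ 1 there is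
n ≥ N with n(1+cos(β+nα)) ≤ 40. -/
lemma key (α β : ℝ) (hirr : Irrational (α / (2 * π))) (N : ℕ) (hN : 1 ≤ N) :
    ∃ n : ℕ, N ≤ n ∧ (n : ℝ) * (1 + Real.cos (β + n * α)) ≤ 40 := by
  have h2pi : (0:ℝ) < 2 * π := by positivity
  set ξ : ℝ := α / (2 * π) with hξ
  have hαξ : α = ξ * (2 * π) := (div_mul_cancel₀ α h2pi.ne').symm
  obtain ⟨j, q, hq0, hqN, hdir⟩ := Real.exists_int_int_abs_mul_sub_le ξ (n := N) hN
  set s : ℝ := q * α - 2 * π * j with hsdef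
  have hs2 : s = 2 * π * (q * ξ - j) := by rw [hsdef, hαξ]; ring
  have hsne : s ≠ 0 := by
    intro h
    rw [hs2] at h
    have : (q:ℝ) * ξ = j := by
      have := mul_eq_zero.mp h
      rcases this with h' | h'
      · linarith
      · linarith
    have hq0' : (q:ℝ) ≠ 0 := by exact_mod_cast hq0.ne'
    have hrat : ξ = (((j : ℚ) / (q : ℚ) : ℚ) : ℝ) := by
      push_cast
      field_simp
      linarith [this]
    exact hirr ⟨(j : ℚ) / (q : ℚ), hrat.symm⟩
  have hsbound : |s| ≤ 2 * π / (N + 1) := by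
    rw [hs2, abs_mul, abs_of_pos h2pi]
    rw [div_eq_mul_inv]
    gcongr
    · calc |(q:ℝ) * ξ - j| ≤ 1 / (N + 1) := hdir
        _ = ((N:ℝ)+1)⁻¹ := one_div _
  obtain ⟨k, m, hk, hclose⟩ := sweep (β + N * α) s hsne
  set n : ℕ := N + k * q.toNat with hn
  have hqcast : ((q.toNat : ℕ) : ℝ) = (q : ℝ) := by
    exact_mod_cast congrArg (Int.cast : ℤ → ℝ) (Int.toNat_of_nonneg hq0.le)
  refine ⟨n, Nat.le_add_right _ _, ?_⟩
  have hncast : (n : ℝ) = N + k * q := by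
    rw [hn]; push_cast [hqcast]; ring
  set e : ℝ := β + N * α + k * s - π - 2 * π * m with he
  have hecos : Real.cos (β + n * α) = - Real.cos e := by
    have h1 : β + (n:ℝ) * α = (π + e) + ((m + (k:ℤ) * j : ℤ) : ℝ) * (2 * π) := by
      rw [hncast, he, hsdef]; push_cast; ring
    rw [h1, Real.cos_add_int_mul_two_pi,
      show π + e = π - (-e) by ring, Real.cos_pi_sub, Real.cos_neg]
  have hcosbound : 1 + Real.cos (β + n * α) ≤ e ^ 2 / 2 := by
    rw [hecos]
    have := Real.one_sub_sq_div_two_le_cos (x := e)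
    linarith
  have heabs : |e| ≤ |s| := hclose
  have he2 : e ^ 2 ≤ s ^ 2 := by
    have := sq_abs e; have := sq_abs s
    nlinarith [abs_nonneg e, abs_nonneg s]
  have hnn : (0:ℝ) ≤ 1 + Real.cos (β + n * α) := by
    have := Real.neg_one_le_cos (β + n * α); linarith
  have hpi : π < 3.15 := Real.pi_lt_d2
  have hpipos : 0 < π := Real.pi_pos
  have hq1 : (1:ℝ) ≤ q := by exact_mod_cast hq0
  have hqle : (q:ℝ) ≤ N := by exact_mod_cast hqN
  have hN1 : (1:ℝ) ≤ N := by exact_mod_cast hN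
  have hsabs : 0 < |s| := abs_pos.mpr hsne
  -- main estimate
  have hsq : s^2 ≤ (2 * π / (N+1))^2 := by
    rw [← sq_abs s]
    exact pow_le_pow_left₀ (abs_nonneg s) hsbound 2
  have hN0 : (0:ℝ) < (N:ℝ) + 1 := by positivity
  have hterm1 : (N:ℝ) * (s^2 / 2) ≤ 2 * π^2 := by
    have hkey : (N:ℝ) * ((2 * π / (N+1))^2 / 2) ≤ 2 * π^2 :=
      aux1 N (Nat.cast_nonneg N) π Real.pi_pos
    refine le_trans ?_ hkey
    gcongr
  have hterm2 : (k:ℝ) * q * (s^2/2) ≤ 2 * π^2 := by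
    have hqs : (q:ℝ) * |s| ≤ 2 * π := by
      calc (q:ℝ) * |s| ≤ (N:ℝ) * (2 * π / (N+1)) := by
            apply mul_le_mul hqle hsbound (abs_nonneg s) (by positivity)
        _ ≤ 2 * π := by
            rw [show (N:ℝ) * (2 * π / (N+1)) = 2 * π * ((N:ℝ)/(N+1)) by ring]
            have h9 : (N:ℝ) / (N+1) ≤ 1 := by
              rw [div_le_one (by linarith)]; linarith
            exact mul_le_of_le_one_right (by positivity) h9
    have h1 : (k:ℝ) * q * (s^2/2) = ((k:ℝ) * |s|) * ((q:ℝ) * |s|) / 2 := by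
      rw [← sq_abs s]; ring
    rw [h1]
    have hknn : 0 ≤ (k:ℝ) * |s| := by positivity
    have hqnn : 0 ≤ (q:ℝ) * |s| := mul_nonneg (by linarith) (abs_nonneg s)
    calc ((k:ℝ)*|s|) * ((q:ℝ)*|s|) / 2 ≤ (2*π) * (2*π) / 2 := by gcongr
      _ = 2 * π^2 := by ring
  clear_value ξ s e n
  calc (n:ℝ) * (1 + Real.cos (β + n * α)) ≤ (n:ℝ) * (e^2/2) := by
        apply mul_le_mul_of_nonneg_left _ (Nat.cast_nonneg n)
        exact hcosbound
    _ ≤ (n:ℝ) * (s^2/2) := by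
        apply mul_le_mul_of_nonneg_left _ (Nat.cast_nonneg n)
        linarith [he2]
    _ = (N:ℝ) * (s^2/2) + (k:ℝ) * q * (s^2/2) := by rw [hncast]; ring
    _ ≤ 2 * π^2 + 2 * π^2 := by linarith
    _ ≤ 40 := by nlinarith [Real.pi_pos, Real.pi_lt_d2]

/-- for λ of modulus 1 not a root of unity, a_1, b_1 real, a_2 ≠ 0, b_2
complex, and u_n = a_1 n + b_1 + (a_2 n + b_2) λ^n + conj(a_2 n + b_2) conj(λ)^n:
u_n → ∞ iff a_1 > 2|a_2|; if a_1 > 2|a_2| there are a rational ε > 0 and N with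
u_n > εn for n > N; and if a_1 = 2|a_2| then u_n is infinitely often bounded by a
constant. -/
theorem divergence_order_six_critical_case
    (lam : ℂ) (hmod : ‖lam‖ = 1)
    (hru : ∀ k : ℕ, 0 < k → lam ^ k ≠ 1)
    (a1 b1 : ℝ) (a2 b2 : ℂ) (ha2 : a2 ≠ 0)
    (u : ℕ → ℝ)
    (hu : ∀ n : ℕ, (u n : ℂ) =
      (a1 : ℂ) * n + (b1 : ℂ) + (a2 * n + b2) * lam ^ n
        + star (a2 * n + b2) * (star lam) ^ n) :
    (Tendsto u atTop atTop ↔ 2 * ‖a2‖ < a1) ∧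
    (2 * ‖a2‖ < a1 →
      ∃ ε : ℚ, 0 < ε ∧ ∃ N : ℕ, ∀ n : ℕ, N < n → (ε : ℝ) * n < u n) ∧
    (a1 = 2 * ‖a2‖ → ∃ c : ℝ, {n : ℕ | u n ≤ c}.Infinite) := by
  set r : ℝ := ‖a2‖ with hrdef
  have hr : 0 < r := by
    rw [hrdef]; exact (norm_pos_iff.mpr ha2)
  set α : ℝ := lam.arg with hα
  set β : ℝ := a2.arg with hβ
  have hlam : lam = Complex.exp (α * Complex.I) := by
    have h := Complex.norm_mul_exp_arg_mul_I lam
    rw [hmod] at h; simpa using h.symm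
  have ha2e : a2 = (r : ℂ) * Complex.exp (β * Complex.I) :=
    (Complex.norm_mul_exp_arg_mul_I a2).symm
  have hB : (0:ℝ) ≤ ‖b2‖ := norm_nonneg _
  -- α/(2π) is irrational
  have hirr : Irrational (α / (2 * Real.pi)) := by
    rintro ⟨t, ht⟩
    have h2pi : (0:ℝ) < 2 * Real.pi := by positivity
    have hαt : α = t * (2 * Real.pi) := by
      field_simp at ht; linarith
    apply hru t.den t.pos
    have hden : ((t.den : ℝ)) * (t : ℝ) = ((t.num : ℝ)) := by
      have h9 : ((t * (t.den : ℚ) : ℚ) : ℝ) = (((t.num : ℚ) : ℚ) : ℝ) := by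
        exact_mod_cast congrArg (Rat.cast : ℚ → ℝ) (Rat.mul_den_eq_num t)
      push_cast at h9
      linarith
    have hdenC : ((t.den : ℂ)) * ((t : ℝ) : ℂ) = ((t.num : ℂ)) := by exact_mod_cast hden
    rw [hlam, ← Complex.exp_nat_mul]
    have h10 : ((t.den : ℕ) : ℂ) * ((α : ℝ) * Complex.I) = (t.num : ℂ) * (2 * Real.pi * Complex.I) := by
      rw [hαt]
      push_cast
      linear_combination (2 * (Real.pi : ℂ) * Complex.I) * hdenC
    rw [h10, Complex.exp_int_mul_two_pi_mul_I]
  -- real form of u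
  have hre : ∀ n : ℕ, u n = a1 * n + b1 + 2 * (((a2 * n + b2) * lam ^ n).re) := by
    intro n
    have h1 : star (a2 * (n:ℂ) + b2) * (star lam) ^ n
        = (starRingEnd ℂ) ((a2 * n + b2) * lam ^ n) := by
      rw [← star_pow, ← star_mul']; rfl
    have h := hu n
    rw [h1] at h
    have h0 : (a1:ℂ) * (n:ℂ) + (b1:ℂ) = ((a1 * n + b1 : ℝ) : ℂ) := by push_cast; ring
    rw [h0, add_assoc, Complex.add_conj, ← Complex.ofReal_add] at h
    have := Complex.ofReal_injective h
    linarith [this]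
  -- split of the oscillating part
  have hsplit : ∀ n : ℕ, (((a2 * n + b2) * lam ^ n).re)
      = (n:ℝ) * (r * Real.cos (β + n * α)) + (b2 * lam ^ n).re := by
    intro n
    have ha2lam : a2 * lam ^ n = ((r:ℂ)) * Complex.exp (((β + n * α : ℝ)) * Complex.I) := by
      rw [ha2e, hlam, ← Complex.exp_nat_mul, ← mul_assoc, mul_assoc ((r:ℂ)), ← Complex.exp_add]
      congr 2
      push_cast
      ring
    have hmul : (a2 * (n:ℂ) + b2) * lam ^ n = (a2 * lam ^ n) * (n:ℂ) + b2 * lam ^ n := by ring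
    rw [hmul, Complex.add_re, ha2lam]
    congr 1
    rw [show ((r:ℂ)) * Complex.exp (((β + n * α : ℝ)) * Complex.I) * (n:ℂ)
        = (((r * n : ℝ)):ℂ) * Complex.exp (((β + n * α : ℝ)) * Complex.I) by push_cast; ring]
    rw [Complex.re_ofReal_mul, Complex.exp_ofReal_mul_I_re]
    ring
  -- bound on the b2 part
  have hb2 : ∀ n : ℕ, |(b2 * lam ^ n).re| ≤ ‖b2‖ := by
    intro n
    calc |(b2 * lam ^ n).re| ≤ ‖b2 * lam ^ n‖ := Complex.abs_re_le_norm _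
      _ = ‖b2‖ := by rw [norm_mul, norm_pow, hmod, one_pow, mul_one]
  -- bound on the whole oscillating part
  have habs : ∀ n : ℕ, |(((a2 * n + b2) * lam ^ n).re)| ≤ r * n + ‖b2‖ := by
    intro n
    calc |(((a2 * n + b2) * lam ^ n).re)| ≤ ‖(a2 * n + b2) * lam ^ n‖ :=
          Complex.abs_re_le_norm _
      _ = ‖a2 * n + b2‖ := by rw [norm_mul, norm_pow, hmod, one_pow, mul_one]
      _ ≤ ‖a2 * n‖ + ‖b2‖ := norm_add_le _ _
      _ = r * n + ‖b2‖ := by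
          rw [norm_mul, hrdef]
          simp
  -- Part 2
  have hP2 : 2 * r < a1 → ∃ ε : ℚ, 0 < ε ∧ ∃ N : ℕ, ∀ n : ℕ, N < n → (ε : ℝ) * n < u n := by
    intro h
    set d : ℝ := a1 - 2 * r with hd
    have hd0 : 0 < d := by rw [hd]; linarith
    obtain ⟨ε, hε0, hεd⟩ := exists_rat_btwn (show (0:ℝ) < d / 2 by linarith)
    set C : ℝ := |b1| + 2 * ‖b2‖ with hC
    refine ⟨ε, by exact_mod_cast hε0, ⌈2 * C / d⌉₊, ?_⟩
    intro n hn
    have h0 : 2 * C / d ≤ (⌈2 * C / d⌉₊ : ℝ) := Nat.le_ceil _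
    have h1 : (⌈2 * C / d⌉₊ : ℝ) < n := by exact_mod_cast hn
    have h2 : 2 * C / d < n := lt_of_le_of_lt h0 h1
    have h3 : 2 * C < d * n := by
      rw [div_lt_iff₀ hd0] at h2; linarith
    have h4 := (abs_le.mp (habs n)).1
    have h5 := hre n
    have h6 : (ε:ℝ) * n ≤ (d / 2) * n :=
      mul_le_mul_of_nonneg_right hεd.le (Nat.cast_nonneg n)
    have h7 : a1 * (n:ℝ) = d * n + 2 * (r * n) := by rw [hd]; ring
    have h8 : -|b1| ≤ b1 := neg_abs_le b1
    linarith
  -- bounded case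
  have hbdd : a1 ≤ 2 * r → ∃ c : ℝ, {n : ℕ | u n ≤ c}.Infinite := by
    intro h
    refine ⟨80 * r + b1 + 2 * ‖b2‖, Set.infinite_of_forall_exists_gt ?_⟩
    intro a
    obtain ⟨n, hn1, hn2⟩ := key α β hirr (a + 1) (Nat.le_add_left 1 a)
    refine ⟨n, ?_, by omega⟩
    show u n ≤ _
    have h1 := hre n
    have h2 := hsplit n
    have h3 := (abs_le.mp (hb2 n)).2
    have h4 : a1 * (n:ℝ) ≤ 2 * r * n :=
      mul_le_mul_of_nonneg_right h (Nat.cast_nonneg n)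
    have h5 : 2 * r * ((n:ℝ) * (1 + Real.cos (β + n * α))) ≤ 2 * r * 40 :=
      mul_le_mul_of_nonneg_left hn2 (by positivity)
    nlinarith [h5]
  -- assemble
  refine ⟨⟨?_, ?_⟩, hP2, fun heq => hbdd (le_of_eq heq)⟩
  · intro ht
    by_contra hc
    push_neg at hc
    obtain ⟨c, hcinf⟩ := hbdd hc
    have hev := ht.eventually_gt_atTop c
    rw [eventually_atTop] at hev
    obtain ⟨N, hN⟩ := hev
    obtain ⟨n, hnS, hn⟩ := hcinf.exists_gt N
    have : u n ≤ c := hnS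
    have := hN n hn.le
    linarith
  · intro h
    obtain ⟨ε, hε, N, hN⟩ := hP2 h
    have h1 : Tendsto (fun n : ℕ => (ε:ℝ) * n) atTop atTop := by
      apply Tendsto.const_mul_atTop' (by exact_mod_cast hε)
      exact tendsto_natCast_atTop_atTop
    apply tendsto_atTop_mono' atTop ?_ h1
    filter_upwards [eventually_gt_atTop N] with n hn
    exact (hN n hn).le
end

section
/- Let λ ∈ ℂ be non-real with |λ| = 1, and let C be a polynomial with complex coefficients of degree at least 1 and leading coefficient b ≠ 0. Then the real sequence s_n = C(n) λ^n + conj(C(n)) conj(λ)^n is unbounded below: for every T ∈ ℝ there exists n with s_n < T. In particular, s_n does not tend to ∞. -/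
open Filter Finset Polynomial

lemma abs_eval_le (P : Polynomial ℂ) (k : ℕ) (hk : P.natDegree ≤ k) :
    ∃ A : ℝ, 0 ≤ A ∧ ∀ n : ℕ, 1 ≤ n → ‖P.eval (n:ℂ)‖ ≤ A * (n:ℝ)^k := by
  refine ⟨∑ i ∈ Finset.range (P.natDegree + 1), ‖P.coeff i‖,
    Finset.sum_nonneg fun i _ => norm_nonneg _, fun n hn => ?_⟩
  have h1 : (1:ℝ) ≤ (n:ℝ) := by exact_mod_cast hn
  rw [Polynomial.eval_eq_sum_range]
  refine le_trans (norm_sum_le _ _) ?_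
  rw [Finset.sum_mul]
  refine Finset.sum_le_sum fun i hi => ?_
  rw [norm_mul, norm_pow, Complex.norm_natCast]
  have : (n:ℝ)^i ≤ (n:ℝ)^k := by
    apply pow_le_pow_right₀ h1
    exact le_trans (Nat.lt_succ_iff.mp (Finset.mem_range.mp hi)) hk
  nlinarith [norm_nonneg (P.coeff i), pow_nonneg (le_trans zero_le_one h1) i]

lemma abel_bound (μ : ℂ) (hμ : ‖μ‖ = 1) (hμ1 : μ ≠ 1) (f : ℕ → ℂ) (a b : ℕ) (hab : a ≤ b) :
    ‖∑ n ∈ Finset.Ico a b, f n * μ^n‖ ≤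
      (‖f b‖ + ‖f a‖ +
        ∑ n ∈ Finset.Ico a b, ‖f (n+1) - f n‖) / ‖μ - 1‖ := by
  have hpos : 0 < ‖μ - 1‖ := by
    exact norm_pos_iff.mpr (sub_ne_zero.mpr hμ1)
  rw [le_div_iff₀ hpos]
  have key : (μ - 1) * (∑ n ∈ Finset.Ico a b, f n * μ^n) =
      (f b * μ^b - f a * μ^a) - ∑ n ∈ Finset.Ico a b, (f (n+1) - f n) * μ^(n+1) := by
    have tel : ∑ n ∈ Finset.Ico a b, (f (n+1) * μ^(n+1) - f n * μ^n) = f b * μ^b - f a * μ^a := by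
      induction b, hab using Nat.le_induction with
      | base => simp
      | succ m hm ih =>
        rw [Finset.sum_Ico_succ_top hm, ih]
        ring
    calc (μ - 1) * (∑ n ∈ Finset.Ico a b, f n * μ^n)
        = ∑ n ∈ Finset.Ico a b, ((f (n+1) * μ^(n+1) - f n * μ^n) - (f (n+1) - f n) * μ^(n+1)) := by
          rw [Finset.mul_sum]; apply Finset.sum_congr rfl; intro n _; ring
      _ = _ := by rw [Finset.sum_sub_distrib, tel]
  calc ‖∑ n ∈ Finset.Ico a b, f n * μ^n‖ * ‖μ - 1‖
      = ‖(μ - 1) * (∑ n ∈ Finset.Ico a b, f n * μ^n)‖ := by rw [norm_mul]; ring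
    _ = ‖(f b * μ^b - f a * μ^a) - ∑ n ∈ Finset.Ico a b, (f (n+1) - f n) * μ^(n+1)‖ := by rw [key]
    _ ≤ ‖f b * μ^b - f a * μ^a‖ + ‖∑ n ∈ Finset.Ico a b, (f (n+1) - f n) * μ^(n+1)‖ := by
        exact norm_sub_le _ _
    _ ≤ (‖f b‖ + ‖f a‖) + ∑ n ∈ Finset.Ico a b, ‖f (n+1) - f n‖ := by
        gcongr
        · refine le_trans (norm_sub_le _ _) ?_
          simp [norm_mul, norm_pow, hμ]
        · refine le_trans (norm_sum_le _ _) ?_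
          refine le_of_eq (Finset.sum_congr rfl fun n _ => ?_)
          simp [norm_mul, norm_pow, hμ]

lemma window_bound (P : Polynomial ℂ) (hP : 1 ≤ P.natDegree) (μ : ℂ)
    (hμ : ‖μ‖ = 1) (hμ1 : μ ≠ 1) :
    ∃ K : ℝ, 0 ≤ K ∧ ∀ M : ℕ, 1 ≤ M →
      ‖∑ n ∈ Finset.Ico M (2*M), P.eval (n:ℂ) * μ^n‖ ≤ K * (M:ℝ)^P.natDegree := by
  have hP0 : P ≠ 0 := fun h => by rw [h, Polynomial.natDegree_zero] at hP; omega
  set e := P.natDegree with he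
  set D := P.comp (X + Polynomial.C 1) - P with hD
  have hq : (X + Polynomial.C (1:ℂ)).natDegree = 1 := Polynomial.natDegree_X_add_C 1
  have hcompdeg : (P.comp (X + Polynomial.C 1)).natDegree = e := by
    rw [Polynomial.natDegree_comp, hq, mul_one]
  have hlc : (P.comp (X + Polynomial.C 1)).leadingCoeff = P.leadingCoeff := by
    rw [Polynomial.leadingCoeff_comp (by rw [hq]; omega), (Polynomial.monic_X_add_C (1:ℂ)), one_pow, mul_one]
  have hcomp0 : P.comp (X + Polynomial.C 1) ≠ 0 := by
    rw [← Polynomial.leadingCoeff_ne_zero, hlc, Polynomial.leadingCoeff_ne_zero]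
    exact hP0
  have hDdeg : D.natDegree ≤ e - 1 := by
    rcases eq_or_ne D 0 with h0 | h0
    · simp [h0]
    · have hlt : D.degree < (P.comp (X + Polynomial.C 1)).degree := by
        apply Polynomial.degree_sub_lt
        · rw [Polynomial.degree_eq_natDegree hcomp0, Polynomial.degree_eq_natDegree hP0, hcompdeg]
        · exact hcomp0
        · exact hlc
      have h2 := Polynomial.natDegree_lt_natDegree h0 hlt
      omega
  obtain ⟨A, hA0, hA⟩ := abs_eval_le P e le_rfl
  obtain ⟨B, hB0, hB⟩ := abs_eval_le D (e-1) hDdeg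
  have hμpos : 0 < ‖μ - 1‖ := norm_pos_iff.mpr (sub_ne_zero.mpr hμ1)
  refine ⟨(A * 2^e + A + B * 2^(e-1)) / ‖μ - 1‖, by positivity, fun M hM => ?_⟩
  have hM1 : (1:ℝ) ≤ (M:ℝ) := by exact_mod_cast hM
  have hMpos : (0:ℝ) < M := lt_of_lt_of_le zero_lt_one hM1
  refine le_trans (abel_bound μ hμ hμ1 (fun n => P.eval (n:ℂ)) M (2*M) (by omega)) ?_
  have hrw : (A * 2^e + A + B * 2^(e-1)) / ‖μ - 1‖ * (M:ℝ)^e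
      = ((A * 2^e + A + B * 2^(e-1)) * (M:ℝ)^e) / ‖μ - 1‖ := by ring
  rw [hrw]
  gcongr
  have hDn : ∀ n : ℕ, P.eval (((n+1 : ℕ)):ℂ) - P.eval (n:ℂ) = D.eval (n:ℂ) := by
    intro n
    rw [hD, Polynomial.eval_sub, Polynomial.eval_comp]
    push_cast
    simp
  have h1 : ‖P.eval ((2*M : ℕ):ℂ)‖ ≤ A * 2^e * (M:ℝ)^e := by
    have := hA (2*M) (by omega)
    calc ‖P.eval ((2*M : ℕ):ℂ)‖ ≤ A * ((2*M : ℕ):ℝ)^e := this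
      _ = A * 2^e * (M:ℝ)^e := by push_cast; rw [mul_pow]; ring
  have h2 : ‖P.eval ((M : ℕ):ℂ)‖ ≤ A * (M:ℝ)^e := hA M hM
  have h3 : ∑ n ∈ Finset.Ico M (2*M), ‖P.eval (((n+1 : ℕ)):ℂ) - P.eval (n:ℂ)‖
      ≤ B * 2^(e-1) * (M:ℝ)^e := by
    have hcard : (Finset.Ico M (2*M)).card = M := by rw [Nat.card_Ico]; omega
    have step : ∀ n ∈ Finset.Ico M (2*M),
        ‖P.eval (((n+1 : ℕ)):ℂ) - P.eval (n:ℂ)‖ ≤ B * (2*(M:ℝ))^(e-1) := by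
      intro n hn
      rw [Finset.mem_Ico] at hn
      rw [hDn n]
      refine le_trans (hB n (by omega)) ?_
      have hn2 : (n:ℝ) ≤ 2*(M:ℝ) := by exact_mod_cast le_of_lt hn.2
      have := pow_le_pow_left₀ (by positivity) hn2 (e-1)
      nlinarith
    refine le_trans (Finset.sum_le_card_nsmul _ _ _ step) ?_
    rw [hcard, nsmul_eq_mul]
    have hMe : (M:ℝ) * (M:ℝ)^(e-1) = (M:ℝ)^e := by
      rw [← pow_succ']
      congr 1
      omega
    rw [← hMe]
    apply le_of_eq
    rw [mul_pow]
    ring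
  calc ‖P.eval ((2*M : ℕ):ℂ)‖ + ‖P.eval ((M : ℕ):ℂ)‖
        + ∑ n ∈ Finset.Ico M (2*M), ‖P.eval (((n+1 : ℕ)):ℂ) - P.eval (n:ℂ)‖
      ≤ A * 2^e * (M:ℝ)^e + A * (M:ℝ)^e + B * 2^(e-1) * (M:ℝ)^e := by
        gcongr
    _ = (A * 2^e + A + B * 2^(e-1)) * (M:ℝ)^e := by ring

lemma eval_lower (C : Polynomial ℂ) (hdeg : 1 ≤ C.natDegree) (hb : C.leadingCoeff ≠ 0) :
    ∃ M₀ : ℕ, 1 ≤ M₀ ∧ ∀ n : ℕ, M₀ ≤ n →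
      ‖C.leadingCoeff‖ / 2 * (n:ℝ)^C.natDegree ≤ ‖C.eval (n:ℂ)‖ := by
  set d := C.natDegree with hd
  set b := C.leadingCoeff with hbdef
  have hbpos : 0 < ‖b‖ := norm_pos_iff.mpr hb
  have hE : C.eraseLead + Polynomial.C b * X ^ d = C := Polynomial.eraseLead_add_C_mul_X_pow C
  have hEdeg : C.eraseLead.natDegree ≤ d - 1 := Polynomial.eraseLead_natDegree_le C
  obtain ⟨B, hB0, hB⟩ := abs_eval_le C.eraseLead (d-1) hEdeg
  refine ⟨max 1 (⌈2*B/‖b‖⌉₊ + 1), le_max_left _ _, fun n hn => ?_⟩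
  have hn1 : 1 ≤ n := le_trans (le_max_left _ _) hn
  have hn1' : (1:ℝ) ≤ (n:ℝ) := by exact_mod_cast hn1
  have hnB : 2*B/‖b‖ ≤ (n:ℝ) := by
    refine le_trans (Nat.le_ceil _) ?_
    have : ⌈2*B/‖b‖⌉₊ ≤ n := by
      have := le_trans (le_max_right 1 _) hn
      omega
    exact_mod_cast this
  have hBn : 2 * B ≤ ‖b‖ * (n:ℝ) := by
    rw [div_le_iff₀ hbpos] at hnB
    linarith
  have h0 := congrArg (Polynomial.eval ((n:ℕ):ℂ)) hE
  rw [Polynomial.eval_add, Polynomial.eval_mul, Polynomial.eval_C, Polynomial.eval_pow,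
    Polynomial.eval_X] at h0
  have key : ‖b * (n:ℂ)^d‖
      ≤ ‖C.eval (n:ℂ)‖ + ‖C.eraseLead.eval (n:ℂ)‖ := by
    have heq : b * (n:ℂ)^d = C.eval (n:ℂ) - C.eraseLead.eval (n:ℂ) := by
      linear_combination h0
    rw [heq]
    exact norm_sub_le _ _
  have hmain : ‖b * (n:ℂ)^d‖ = ‖b‖ * (n:ℝ)^d := by
    rw [norm_mul, norm_pow, Complex.norm_natCast]
  have hEn : ‖C.eraseLead.eval (n:ℂ)‖ ≤ B * (n:ℝ)^(d-1) := hB n hn1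
  have hpow : (n:ℝ)^d = (n:ℝ) * (n:ℝ)^(d-1) := by
    rw [← pow_succ']
    congr 1
    omega
  have hpow1 : (0:ℝ) < (n:ℝ)^(d-1) := by positivity
  rw [hmain] at key
  nlinarith [hpow1, hn1']

set_option maxHeartbeats 1000000 in
lemma key_unbounded (lam : ℂ) (hmod : ‖lam‖ = 1) (hnr : lam.im ≠ 0)
    (C : Polynomial ℂ) (hdeg : 1 ≤ C.natDegree) (hb : C.leadingCoeff ≠ 0)
    (s : ℕ → ℝ)
    (hsre : ∀ n : ℕ, s n = 2 * (C.eval (n:ℂ) * lam ^ n).re) :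
    ∀ T : ℝ, ∃ n : ℕ, s n < T := by
  set d := C.natDegree with hd
  set b := C.leadingCoeff with hbdef
  have hbpos : 0 < ‖b‖ := norm_pos_iff.mpr hb
  have hC0 : C ≠ 0 := Polynomial.leadingCoeff_ne_zero.mp hb
  have hl1 : lam ≠ 1 := by intro h; rw [h] at hnr; simp at hnr
  have hl2 : lam^2 ≠ 1 := by
    intro h
    have h2 : (lam - 1) * (lam + 1) = 0 := by linear_combination h
    rcases mul_eq_zero.mp h2 with h3 | h3
    · exact hl1 (by linear_combination h3)
    · have h4 : lam = -1 := by linear_combination h3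
      rw [h4] at hnr; simp at hnr
  have habs2 : ‖lam^2‖ = 1 := by rw [norm_pow, hmod, one_pow]
  have hCC : (C*C).natDegree = 2*d := by
    rw [Polynomial.natDegree_mul hC0 hC0]; omega
  obtain ⟨K₁, hK₁0, hK₁⟩ := window_bound C hdeg lam hmod hl1
  obtain ⟨K₂, hK₂0, hK₂⟩ := window_bound (C*C) (by rw [hCC]; omega) (lam^2) habs2 hl2
  rw [hCC] at hK₂
  obtain ⟨A, hA0, hA⟩ := abs_eval_le C d le_rfl
  obtain ⟨M₀, hM₀1, hM₀⟩ := eval_lower C hdeg hb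
  intro T
  by_contra hcon
  push_neg at hcon
  -- hcon : ∀ n, T ≤ s n
  set t := |T| with ht
  have ht0 : 0 ≤ t := abs_nonneg T
  have htT : T ≤ t := le_abs_self T
  have htT2 : -t ≤ T := neg_abs_le T
  set Rt := 2*K₂ + 4*A*2^d*K₁ + 2*A*2^d*t + 6*K₁*t + t^2 with hRt
  have hRt0 : 0 ≤ Rt := by positivity
  obtain ⟨M, hMgt⟩ := exists_nat_gt (max ((max M₀ 1 : ℕ):ℝ) (2*Rt/(‖b‖)^2))
  have hMM₀ : M₀ ≤ M := by
    have h1 : ((max M₀ 1 : ℕ):ℝ) < (M:ℝ) := lt_of_le_of_lt (le_max_left _ _) hMgt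
    have h2 : (max M₀ 1 : ℕ) ≤ M := by exact_mod_cast le_of_lt h1
    omega
  have hM1 : 1 ≤ M := by
    have h1 : ((max M₀ 1 : ℕ):ℝ) < (M:ℝ) := lt_of_le_of_lt (le_max_left _ _) hMgt
    have h2 : (max M₀ 1 : ℕ) ≤ M := by exact_mod_cast le_of_lt h1
    omega
  set m : ℝ := (M:ℝ) with hm
  clear_value m
  have hmbig : 2*Rt/(‖b‖)^2 < m := lt_of_le_of_lt (le_max_right _ _) hMgt
  have hm1 : (1:ℝ) ≤ m := by rw [hm]; exact_mod_cast hM1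
  have hm0 : (0:ℝ) < m := lt_of_lt_of_le zero_lt_one hm1
  set md := m^d with hmd
  clear_value md
  set P := m^(2*d) with hP
  clear_value P
  have hmd0 : 0 < md := by rw [hmd]; positivity
  have hP0 : 0 < P := by rw [hP]; positivity
  have hp1 : md * md = P := by rw [hmd, hP, ← pow_add, two_mul]
  have hp2 : md ≤ P := by rw [hmd, hP]; exact pow_le_pow_right₀ hm1 (by omega)
  have hp3 : m * md ≤ P := by
    have : m * md = m^(d+1) := by rw [hmd, ← pow_succ']
    rw [this, hP]
    exact pow_le_pow_right₀ hm1 (by omega)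
  have hp4 : m ≤ P := by
    have : m = m^1 := (pow_one m).symm
    rw [this, hP]
    exact pow_le_pow_right₀ hm1 (by omega)
  set W := Finset.Ico M (2*M) with hW
  have hcard : W.card = M := by rw [hW, Nat.card_Ico]; omega
  set S1 := ∑ n ∈ W, s n with hS1def
  clear_value S1
  -- bound on S1
  have hS1 : |S1| ≤ 2*K₁*md := by
    have hsum1' : S1 = 2 * (∑ n ∈ W, C.eval (n:ℂ) * lam^n).re := by
      rw [hS1def, Complex.re_sum, Finset.mul_sum]
      exact Finset.sum_congr rfl fun n _ => hsre n
    rw [hsum1', abs_mul, abs_two]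
    have h1 : |(∑ n ∈ W, C.eval (n:ℂ) * lam^n).re| ≤ ‖∑ n ∈ W, C.eval (n:ℂ) * lam^n‖ :=
      Complex.abs_re_le_norm _
    have h2 := hK₁ M hM1
    rw [← hd, ← hm, ← hmd] at h2
    calc 2 * |(∑ n ∈ W, C.eval (n:ℂ) * lam^n).re|
        ≤ 2 * (K₁ * md) := by
          refine mul_le_mul_of_nonneg_left (le_trans h1 ?_) (by norm_num)
          exact h2
      _ = 2*K₁*md := by ring
  -- squared identity
  have h_s_sq : ∀ n : ℕ, (s n)^2 =
      2*(‖C.eval (n:ℂ)‖)^2 + 2 * ((C*C).eval (n:ℂ) * (lam^2)^n).re := by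
    intro n
    have hz : ‖C.eval (n:ℂ) * lam^n‖ = ‖C.eval (n:ℂ)‖ := by
      rw [norm_mul, norm_pow, hmod, one_pow, mul_one]
    have hsq : ((C*C).eval (n:ℂ) * (lam^2)^n) = (C.eval (n:ℂ) * lam^n)^2 := by
      rw [Polynomial.eval_mul]; ring
    rw [hsre n, hsq, ← hz]
    set z := C.eval (n:ℂ) * lam^n with hzdef
    have h1 : (‖z‖)^2 = z.re^2 + z.im^2 := by
      rw [Complex.sq_norm, Complex.normSq_apply]; ring
    have h2 : (z^2).re = z.re^2 - z.im^2 := by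
      rw [sq]
      simp [Complex.mul_re]
      ring
    rw [h2, h1]; ring
  -- lower bound per term
  have hlow : ∀ n ∈ W, (‖b‖)^2/4 * P ≤ (‖C.eval (n:ℂ)‖)^2 := by
    intro n hn
    rw [hW, Finset.mem_Ico] at hn
    have h1 := hM₀ n (le_trans hMM₀ hn.1)
    have h2 : md ≤ (n:ℝ)^d := by
      rw [hmd]
      exact pow_le_pow_left₀ (le_of_lt hm0) (by rw [hm]; exact_mod_cast hn.1) d
    have h3 : ‖b‖ / 2 * md ≤ ‖C.eval (n:ℂ)‖ := by
      refine le_trans ?_ h1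
      refine mul_le_mul_of_nonneg_left h2 (by positivity)
    have h4 : (0:ℝ) ≤ ‖b‖ / 2 * md := by positivity
    nlinarith [hp1]
  -- lower bound on sum of squares
  have hsum2 : 2*(M:ℝ)*((‖b‖)^2/4 * P) - 2*K₂*P ≤ ∑ n ∈ W, (s n)^2 := by
    have heq : ∑ n ∈ W, (s n)^2 =
        2*(∑ n ∈ W, (‖C.eval (n:ℂ)‖)^2)
          + 2*(∑ n ∈ W, (C*C).eval (n:ℂ) * (lam^2)^n).re := by
      rw [Complex.re_sum]
      rw [Finset.mul_sum, Finset.mul_sum, ← Finset.sum_add_distrib]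
      exact Finset.sum_congr rfl fun n _ => h_s_sq n
    have hlowsum : (M:ℝ) * ((‖b‖)^2/4 * P) ≤ ∑ n ∈ W, (‖C.eval (n:ℂ)‖)^2 := by
      have := Finset.card_nsmul_le_sum W _ _ hlow
      rw [hcard, nsmul_eq_mul] at this
      exact this
    have hre : -(K₂*P) ≤ (∑ n ∈ W, (C*C).eval (n:ℂ) * (lam^2)^n).re := by
      have h1 : |(∑ n ∈ W, (C*C).eval (n:ℂ) * (lam^2)^n).re|
          ≤ ‖∑ n ∈ W, (C*C).eval (n:ℂ) * (lam^2)^n‖ := Complex.abs_re_le_norm _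
      have h2 := hK₂ M hM1
      rw [← hm, ← hP] at h2
      have h3 := le_trans h1 h2
      have := abs_le.mp h3
      linarith [this.1]
    rw [heq]
    linarith
  -- upper bound per term
  have hub : ∀ n ∈ W, s n ≤ 2*A*2^d*md := by
    intro n hn
    rw [hW, Finset.mem_Ico] at hn
    have hn1 : 1 ≤ n := le_trans hM1 hn.1
    have h1 : (s n) ≤ 2 * ‖C.eval (n:ℂ) * lam^n‖ := by
      rw [hsre n]
      have := Complex.re_le_norm (C.eval (n:ℂ) * lam^n)
      linarith
    have hz : ‖C.eval (n:ℂ) * lam^n‖ = ‖C.eval (n:ℂ)‖ := by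
      rw [norm_mul, norm_pow, hmod, one_pow, mul_one]
    rw [hz] at h1
    have h2 := hA n hn1
    have h3 : (n:ℝ)^d ≤ (2*m)^d := by
      refine pow_le_pow_left₀ (by positivity) ?_ d
      have : (n:ℝ) < 2*m := by
        rw [hm]
        exact_mod_cast hn.2
      linarith
    have h4 : (2*m)^d = 2^d * md := by rw [mul_pow, hmd]
    have h5 : ‖C.eval (n:ℂ)‖ ≤ A * (2*m)^d :=
      le_trans h2 (mul_le_mul_of_nonneg_left h3 hA0)
    rw [h4] at h5
    linarith
  -- Cauchy-Schwarz style bound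
  set U := 2*A*2^d*md + t with hU
  clear_value U
  have hU0 : 0 ≤ U := by
    rw [hU]
    have h1 : (0:ℝ) ≤ 2*A*2^d := by positivity
    have h2 := mul_nonneg h1 hmd0.le
    linarith
  have hterm : ∀ n ∈ W, (s n - T)^2 ≤ U * (s n - T) := by
    intro n hn
    have h1 : 0 ≤ s n - T := by linarith [hcon n]
    have h2 : s n - T ≤ U := by
      have := hub n hn
      rw [hU]
      linarith
    nlinarith
  have hsum_sub : ∑ n ∈ W, (s n - T) = S1 - (M:ℝ)*T := by
    rw [Finset.sum_sub_distrib, Finset.sum_const, hcard, nsmul_eq_mul, hS1def]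
  have hsq_expand : ∑ n ∈ W, (s n - T)^2 = (∑ n ∈ W, (s n)^2) - 2*T*S1 + (M:ℝ)*T^2 := by
    have h1 : ∀ n ∈ W, (s n - T)^2 = (s n)^2 - 2*T*(s n) + T^2 := fun n _ => by ring
    calc ∑ n ∈ W, (s n - T)^2 = ∑ n ∈ W, ((s n)^2 - 2*T*(s n) + T^2) := Finset.sum_congr rfl h1
      _ = (∑ n ∈ W, (s n)^2) - 2*T*(∑ n ∈ W, s n) + (W.card : ℝ)*T^2 := by
          rw [Finset.sum_add_distrib, Finset.sum_sub_distrib, Finset.mul_sum,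
            Finset.sum_const, nsmul_eq_mul]
      _ = (∑ n ∈ W, (s n)^2) - 2*T*S1 + (M:ℝ)*T^2 := by rw [← hS1def, hcard]
  have hcauchy : (∑ n ∈ W, (s n)^2) - 2*T*S1 + (M:ℝ)*T^2 ≤ U * (S1 - (M:ℝ)*T) := by
    rw [← hsq_expand, ← hsum_sub, Finset.mul_sum]
    exact Finset.sum_le_sum hterm
  -- combine
  have hTS1 : 2*T*S1 ≤ 4*t*K₁*md := by
    have h1 : T*S1 ≤ |T*S1| := le_abs_self _
    have h2 : |T*S1| = t * |S1| := by rw [abs_mul, ht]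
    nlinarith [hS1, ht0]
  have hUS : U * (S1 - (M:ℝ)*T) ≤ U * (2*K₁*md + m*t) := by
    refine mul_le_mul_of_nonneg_left ?_ hU0
    have h1 : S1 ≤ 2*K₁*md := le_trans (le_abs_self _) hS1
    have h2 : -((M:ℝ)*T) ≤ m*t := by
      rw [hm]
      nlinarith [htT2, (Nat.cast_nonneg M : (0:ℝ) ≤ (M:ℝ))]
    linarith
  have hMT2 : 0 ≤ (M:ℝ)*T^2 := by positivity
  -- master inequality
  have hbig : (‖b‖)^2/2 * m * P ≤ Rt * P := by
    have hexp : U * (2*K₁*md + m*t) + 4*t*K₁*md + 2*K₂*P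
        = 4*A*2^d*K₁*(md*md) + 2*A*2^d*t*(m*md) + 6*K₁*t*md + t^2*m + 2*K₂*P := by
      rw [hU]; ring
    have l1 : 2*A*2^d*t*(m*md) ≤ 2*A*2^d*t*P := mul_le_mul_of_nonneg_left hp3 (by positivity)
    have l2 : 6*K₁*t*md ≤ 6*K₁*t*P := mul_le_mul_of_nonneg_left hp2 (by positivity)
    have l3 : t^2*m ≤ t^2*P := mul_le_mul_of_nonneg_left hp4 (by positivity)
    have hsum2' : (‖b‖)^2/2 * m * P ≤ (∑ n ∈ W, (s n)^2) + 2*K₂*P := by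
      rw [hm]
      nlinarith [hsum2]
    have hfin : (∑ n ∈ W, (s n)^2) ≤ U * (2*K₁*md + m*t) + 4*t*K₁*md := by
      have := hcauchy
      linarith [hUS, hTS1, hMT2]
    have l0 : 4*A*2^d*K₁*(md*md) = 4*A*2^d*K₁*P := by rw [hp1]
    rw [hRt]
    linarith [l0, l1, l2, l3, hexp, hsum2', hfin]
  have hdiv : (‖b‖)^2/2 * m ≤ Rt := by
    have := (mul_le_mul_iff_of_pos_right hP0).mp hbig
    exact this
  -- contradiction with choice of M
  rw [div_lt_iff₀ (by positivity)] at hmbig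
  nlinarith [hdiv, hmbig]

theorem polynomial_coefficient_unbounded_below
    (lam : ℂ) (hmod : ‖lam‖ = 1) (hnr : lam.im ≠ 0)
    (C : Polynomial ℂ) (hdeg : 1 ≤ C.natDegree) (hb : C.leadingCoeff ≠ 0)
    (s : ℕ → ℝ)
    (hs : ∀ n : ℕ, (s n : ℂ) =
      C.eval (n : ℂ) * lam ^ n + star (C.eval (n : ℂ)) * (star lam) ^ n) :
    (∀ T : ℝ, ∃ n : ℕ, s n < T) ∧ ¬ Tendsto s atTop atTop := by
  have hsre : ∀ n : ℕ, s n = 2 * (C.eval (n:ℂ) * lam ^ n).re := by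
    intro n
    have h := hs n
    have hstar : star (C.eval (n:ℂ)) * (star lam)^n = star (C.eval (n:ℂ) * lam^n) := by
      rw [star_mul', star_pow]
    rw [hstar] at h
    have h2 : (s n : ℂ) = ((2 * (C.eval (n:ℂ) * lam^n).re : ℝ) : ℂ) := by
      rw [h, show star (C.eval (n:ℂ) * lam^n) = (starRingEnd ℂ) (C.eval (n:ℂ) * lam^n) from rfl,
        Complex.add_conj]
    exact_mod_cast h2
  have hkey := key_unbounded lam hmod hnr C hdeg hb s hsre
  refine ⟨hkey, fun htend => ?_⟩
  obtain ⟨T, hT⟩ := Filter.bddBelow_range_of_tendsto_atTop_atTop htend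
  obtain ⟨n, hn⟩ := hkey T
  exact absurd (hT ⟨n, rfl⟩) (not_le.mpr hn)
end
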